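/- Let B be a Young function and T_ε the unfolding operator on a bounded open set Ω ⊂ ℝᴺ with Y = (0,1)ᴺ. Then for every w ∈ L^B(Ω), the Luxemburg norms satisfy ‖T_ε(w)‖_{L^B(Ω×Y)} = ‖w·χ_{Ω̂_ε}‖_{L^B(Ω)} ≤ ‖w‖_{L^B(Ω)}, and in particular ‖T_ε(w)‖_{L^B(Ω×Y)} ≤ (1 + |Y|)‖w‖_{L^B(Ω)}. -/

import Mathlib

open MeasureTheory Filter Set Topology

noncomputable section

def IsYoung (B : ℝ → ℝ) : Prop :=
  ContinuousOn B (Set.Ici 0) ∧ ConvexOn ℝ (Set.Ici 0) B ∧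
  (∀ t : ℝ, 0 ≤ t → 0 ≤ B t) ∧ (∀ t : ℝ, 0 < t → 0 < B t) ∧
  Tendsto (fun t => B t / t) (𝓝[>] (0:ℝ)) (𝓝 0) ∧
  Tendsto (fun t => B t / t) atTop atTop

def youngConj (B : ℝ → ℝ) (t : ℝ) : ℝ := sSup ((fun s => s * t - B s) '' Set.Ici 0)

def unitCell (N : ℕ) : Set (Fin N → ℝ) := Set.univ.pi fun _ => Set.Ioo (0:ℝ) 1

def cellOf {N : ℕ} (ε : ℝ) (ξ : Fin N → ℤ) : Set (Fin N → ℝ) :=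
  {x | ∀ i, x i ∈ Set.Ioo (ε * (ξ i : ℝ)) (ε * ((ξ i : ℝ) + 1))}

def bigXi {N : ℕ} (ε : ℝ) (Ω : Set (Fin N → ℝ)) : Set (Fin N → ℤ) := {ξ | cellOf ε ξ ⊆ Ω}

def hatOmega {N : ℕ} (ε : ℝ) (Ω : Set (Fin N → ℝ)) : Set (Fin N → ℝ) :=
  interior (⋃ ξ ∈ bigXi ε Ω, closure (cellOf ε ξ))

def lamEps {N : ℕ} (ε : ℝ) (Ω : Set (Fin N → ℝ)) : Set (Fin N → ℝ) := Ω \ hatOmega ε Ω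

open Classical in
def unfold {N : ℕ} (ε : ℝ) (Ω : Set (Fin N → ℝ)) (φ : (Fin N → ℝ) → ℝ)
    (x y : Fin N → ℝ) : ℝ :=
  if x ∈ hatOmega ε Ω then φ (fun i => ε * ((⌊x i / ε⌋ : ℝ) + y i)) else 0

/-- Luxemburg norm of `u` with respect to the Young function `B` and the measure `μ`. -/
def luxNorm {α : Type*} [MeasurableSpace α] (μ : MeasureTheory.Measure α) (B : ℝ → ℝ)
    (u : α → ℝ) : ℝ :=
  sInf {k : ℝ | 0 < k ∧ ∫⁻ x, ENNReal.ofReal (B (|u x| / k)) ∂μ ≤ 1}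

/-!
On each ε-cell `ε(ξ + Y)` contained in `Ω` the unfolded function `T_ε w (x, ·)` does not depend on
`x`, and the affine change of variables `y ↦ ε(ξ + y)` turns its integral over `Y`, multiplied by
the cell volume `ε ^ N`, into the integral of `w` over the cell. Since `Ω̂_ε ∩ Ω` is the union of
these cells up to their null boundaries, `∫_{Ω×Y} G(T_ε w) = ∫_Ω G(χ_{Ω̂_ε} w)` for every `G` with
`G 0 = 0`. Taking `G t = B(|t|/k)`, the two Luxemburg norms have the same admissible constants `k`.
The inequality with `‖w‖` follows from `|χ_{Ω̂_ε} w| ≤ |w|` and monotonicity of `B`.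
-/

open Module
open scoped ENNReal

section Young

variable {B : ℝ → ℝ}

theorem IsYoung.map_zero (hB : IsYoung B) : B 0 = 0 := by
  obtain ⟨hcont, -, -, -, hslope, -⟩ := hB
  have hB_eq : (fun t => B t / t * t) =ᶠ[𝓝[>] 0] B := by
    filter_upwards [self_mem_nhdsWithin] with t ht using div_mul_cancel₀ _ (ne_of_gt ht)
  have hlim : Tendsto B (𝓝[>] 0) (𝓝 0) := by
    simpa using (hslope.mul (tendsto_nhdsWithin_of_tendsto_nhds tendsto_id)).congr' hB_eq
  exact tendsto_nhds_unique
    ((hcont 0 self_mem_Ici).mono_left (nhdsWithin_mono 0 Ioi_subset_Ici_self)) hlim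

theorem ConvexOn.monotoneOn_Ici {f : ℝ → ℝ} {a : ℝ} (hf : ConvexOn ℝ (Ici a) f)
    (hmin : ∀ t ∈ Ici a, f a ≤ f t) : MonotoneOn f (Ici a) := by
  intro s hs t ht hst
  rcases (mem_Ici.mp hs).eq_or_lt with rfl | has
  · exact hmin t ht
  · exact hf.le_right_of_left_le'' self_mem_Ici ht has hst (hmin s hs)

theorem IsYoung.monotoneOn (hB : IsYoung B) : MonotoneOn B (Ici 0) :=
  hB.2.1.monotoneOn_Ici fun t ht => by rw [hB.map_zero]; exact hB.2.2.1 t ht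

theorem IsYoung.measurable_comp_abs_div (hB : IsYoung B) {k : ℝ} (hk : 0 < k) :
    Measurable fun t => B (|t| / k) :=
  (hB.1.comp_continuous (continuous_abs.div_const k)
    fun t => div_nonneg (abs_nonneg t) hk.le).measurable

end Young

section Luxemburg

variable {α β : Type*} [MeasurableSpace α] [MeasurableSpace β] {B : ℝ → ℝ}

theorem luxNorm_nonneg (μ : Measure α) (B : ℝ → ℝ) (u : α → ℝ) : 0 ≤ luxNorm μ B u :=
  Real.sInf_nonneg fun _ hk => hk.1.le

theorem luxNorm_eq_of_lintegral_eq {μ : Measure α} {ν : Measure β} {u : α → ℝ} {v : β → ℝ}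
    (h : ∀ k, 0 < k → ∫⁻ x, ENNReal.ofReal (B (|u x| / k)) ∂μ =
      ∫⁻ y, ENNReal.ofReal (B (|v y| / k)) ∂ν) :
    luxNorm μ B u = luxNorm ν B v := by
  unfold luxNorm
  congr 1
  ext k
  exact and_congr_right fun hk => by rw [h k hk]

theorem luxNorm_le_of_abs_le (hB : MonotoneOn B (Ici 0)) {μ : Measure α} {u v : α → ℝ}
    (huv : ∀ x, |u x| ≤ |v x|)
    (hv : ∃ k, 0 < k ∧ ∫⁻ x, ENNReal.ofReal (B (|v x| / k)) ∂μ ≤ 1) :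
    luxNorm μ B u ≤ luxNorm μ B v := by
  refine csInf_le_csInf ⟨0, fun _ hk => hk.1.le⟩ hv fun k ⟨hk, hvk⟩ => ⟨hk, le_trans ?_ hvk⟩
  refine lintegral_mono fun x => ENNReal.ofReal_le_ofReal (hB ?_ ?_ ?_)
  iterate 2 exact div_nonneg (abs_nonneg _) hk.le
  exact div_le_div_of_nonneg_right (huv x) hk.le

end Luxemburg

theorem lintegral_comp_add_smul {E : Type*} [NormedAddCommGroup E] [NormedSpace ℝ E]
    [MeasurableSpace E] [BorelSpace E] [FiniteDimensional ℝ E] (μ : Measure E)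
    [μ.IsAddHaarMeasure] {r : ℝ} (hr : r ≠ 0) (c : E) {F : E → ℝ≥0∞} (hF : Measurable F) :
    ∫⁻ y, F (c + r • y) ∂μ = ENNReal.ofReal |(r ^ finrank ℝ E)⁻¹| * ∫⁻ z, F z ∂μ := by
  have hFc : Measurable fun z => F (c + z) := hF.comp (measurable_const_add c)
  calc ∫⁻ y, F (c + r • y) ∂μ = ∫⁻ z, F (c + z) ∂(μ.map (r • ·)) :=
        (lintegral_map hFc (measurable_const_smul r)).symm
    _ = ENNReal.ofReal |(r ^ finrank ℝ E)⁻¹| * ∫⁻ z, F (c + z) ∂μ := by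
        rw [Measure.map_addHaar_smul μ hr, lintegral_smul_measure, smul_eq_mul]
    _ = ENNReal.ofReal |(r ^ finrank ℝ E)⁻¹| * ∫⁻ z, F z ∂μ := by
        rw [lintegral_add_left_eq_self]

section Cells

variable {N : ℕ} {ε : ℝ} {Ω : Set (Fin N → ℝ)}

theorem cellOf_eq_pi (ε : ℝ) (ξ : Fin N → ℤ) :
    cellOf ε ξ = univ.pi fun i => Ioo (ε * ξ i) (ε * (ξ i + 1)) := by
  ext x
  simp [cellOf, Set.mem_pi]

theorem isOpen_cellOf (ε : ℝ) (ξ : Fin N → ℤ) : IsOpen (cellOf ε ξ) := by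
  rw [cellOf_eq_pi]
  exact isOpen_set_pi finite_univ fun _ _ => isOpen_Ioo

theorem measurableSet_cellOf (ε : ℝ) (ξ : Fin N → ℤ) : MeasurableSet (cellOf ε ξ) :=
  (isOpen_cellOf ε ξ).measurableSet

theorem volume_cellOf (hε : 0 < ε) (ξ : Fin N → ℤ) :
    volume (cellOf ε ξ) = ENNReal.ofReal (ε ^ N) := by
  simp [cellOf_eq_pi, volume_pi_pi, Real.volume_Ioo, mul_add, ENNReal.ofReal_pow hε.le]

theorem volume_closure_cellOf_diff (ε : ℝ) (ξ : Fin N → ℤ) :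
    volume (closure (cellOf ε ξ) \ cellOf ε ξ) = 0 := by
  rw [← (isOpen_cellOf ε ξ).frontier_eq, cellOf_eq_pi]
  exact (convex_pi fun _ _ => convex_Ioo _ _).addHaar_frontier volume

theorem floor_div_eq_of_mem_cellOf (hε : 0 < ε) {ξ : Fin N → ℤ} {x : Fin N → ℝ}
    (hx : x ∈ cellOf ε ξ) (i : Fin N) : ⌊x i / ε⌋ = ξ i := by
  obtain ⟨h₁, h₂⟩ := hx i
  rw [Int.floor_eq_iff, le_div_iff₀ hε, div_lt_iff₀ hε]
  constructor <;> linarith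

theorem pairwise_disjoint_cellOf (hε : 0 < ε) :
    Pairwise (Function.onFun Disjoint (cellOf ε : (Fin N → ℤ) → Set (Fin N → ℝ))) := by
  intro ξ ξ' hne
  refine disjoint_left.mpr fun x hx hx' => hne ?_
  ext i
  rw [← floor_div_eq_of_mem_cellOf hε hx i, floor_div_eq_of_mem_cellOf hε hx' i]

theorem cellOf_subset_hatOmega {ξ : Fin N → ℤ} (hξ : ξ ∈ bigXi ε Ω) :
    cellOf ε ξ ⊆ hatOmega ε Ω :=
  interior_maximal (subset_closure.trans (subset_biUnion_of_mem
    (u := fun ξ => closure (cellOf ε ξ)) hξ)) (isOpen_cellOf ε ξ)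

theorem hatOmega_inter_ae_eq_biUnion_cellOf :
    (hatOmega ε Ω ∩ Ω : Set (Fin N → ℝ)) =ᵐ[volume] ⋃ ξ ∈ bigXi ε Ω, cellOf ε ξ := by
  refine ae_eq_set.mpr ⟨measure_mono_null ?_
    ((measure_biUnion_null_iff (to_countable (bigXi ε Ω))).mpr
      fun ξ _ => volume_closure_cellOf_diff ε ξ), ?_⟩
  · rintro x ⟨⟨hx, -⟩, hx'⟩
    obtain ⟨ξ, hξ, hxξ⟩ := mem_iUnion₂.mp (interior_subset hx)
    exact mem_biUnion hξ ⟨hxξ, fun h => hx' (mem_biUnion hξ h)⟩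
  · refine measure_mono_null (fun x hx => ?_) measure_empty
    obtain ⟨hxU, hx'⟩ := hx
    obtain ⟨ξ, hξ, hxξ⟩ := mem_iUnion₂.mp hxU
    exact hx' ⟨cellOf_subset_hatOmega hξ hxξ, hξ hxξ⟩

theorem measurableSet_hatOmega : MeasurableSet (hatOmega ε Ω) :=
  isOpen_interior.measurableSet

theorem lintegral_indicator_hatOmega (hε : 0 < ε) (φ : (Fin N → ℝ) → ℝ≥0∞) :
    ∫⁻ x in Ω, (hatOmega ε Ω).indicator φ x =
      ∑' ξ : bigXi ε Ω, ∫⁻ x in cellOf ε (ξ : Fin N → ℤ), φ x := by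
  rw [lintegral_indicator measurableSet_hatOmega, Measure.restrict_restrict
      measurableSet_hatOmega, setLIntegral_congr hatOmega_inter_ae_eq_biUnion_cellOf,
    biUnion_eq_iUnion, lintegral_iUnion (fun ξ => measurableSet_cellOf ε _)
      ((pairwise_disjoint_cellOf hε).comp_of_injective Subtype.coe_injective)]

theorem mem_cellOf_iff_mem_unitCell (hε : 0 < ε) (ξ : Fin N → ℤ) (y : Fin N → ℝ) :
    (fun i => ε * (ξ i + y i)) ∈ cellOf ε ξ ↔ y ∈ unitCell N := by
  simp only [cellOf_eq_pi, unitCell, Set.mem_pi, mem_univ, forall_const, mem_Ioo,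
    mul_lt_mul_iff_right₀ hε, lt_add_iff_pos_right, add_lt_add_iff_left]

theorem ofReal_pow_mul_setLIntegral_unitCell (hε : 0 < ε) (ξ : Fin N → ℤ)
    {F : (Fin N → ℝ) → ℝ≥0∞} (hF : Measurable F) :
    ENNReal.ofReal (ε ^ N) * ∫⁻ y in unitCell N, F (fun i => ε * (ξ i + y i)) =
      ∫⁻ z in cellOf ε ξ, F z := by
  have hshift : ∀ y : Fin N → ℝ, (fun i => ε * (ξ i + y i)) = (fun i => ε * ξ i) + ε • y :=
    fun y => funext fun i => mul_add ε _ _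
  have hunit : MeasurableSet (unitCell N) :=
    (isOpen_set_pi finite_univ fun _ _ => isOpen_Ioo).measurableSet
  have hind : ∫⁻ y in unitCell N, F (fun i => ε * (ξ i + y i)) =
      ∫⁻ y, (cellOf ε ξ).indicator F ((fun i => ε * ξ i) + ε • y) := by
    classical
    rw [← lintegral_indicator hunit]
    refine lintegral_congr fun y => ?_
    rw [← hshift, indicator_apply, indicator_apply, mem_cellOf_iff_mem_unitCell hε]
  rw [hind, lintegral_comp_add_smul volume hε.ne' _ (hF.indicator (measurableSet_cellOf ε ξ)),
    lintegral_indicator (measurableSet_cellOf ε ξ), finrank_fin_fun, ← mul_assoc,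
    ← ENNReal.ofReal_mul (by positivity), abs_of_pos (by positivity),
    mul_inv_cancel₀ (by positivity), ENNReal.ofReal_one, one_mul]

end Cells

section Unfolding

variable {N : ℕ} {ε : ℝ} {Ω : Set (Fin N → ℝ)} {w : (Fin N → ℝ) → ℝ}

theorem measurable_unfold (hw : Measurable w) :
    Measurable fun p : (Fin N → ℝ) × (Fin N → ℝ) => unfold ε Ω w p.1 p.2 := by
  refine Measurable.ite (measurableSet_hatOmega.preimage measurable_fst) (hw.comp ?_)
    measurable_const
  fun_prop

theorem unfold_of_mem_cellOf (hε : 0 < ε) {ξ : Fin N → ℤ} (hξ : ξ ∈ bigXi ε Ω)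
    {x : Fin N → ℝ} (hx : x ∈ cellOf ε ξ) (y : Fin N → ℝ) :
    unfold ε Ω w x y = w fun i => ε * (ξ i + y i) := by
  simp only [unfold, if_pos (cellOf_subset_hatOmega hξ hx), floor_div_eq_of_mem_cellOf hε hx]

theorem lintegral_comp_unfold (hε : 0 < ε) (hw : Measurable w) {G : ℝ → ℝ≥0∞}
    (hG : Measurable G) (hG₀ : G 0 = 0) :
    ∫⁻ p in Ω ×ˢ unitCell N, G (unfold ε Ω w p.1 p.2) =
      ∫⁻ x in Ω, G ((hatOmega ε Ω).indicator w x) := by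
  set H : (Fin N → ℝ) → ℝ≥0∞ := fun x => ∫⁻ y in unitCell N, G (unfold ε Ω w x y)
  have hH : (hatOmega ε Ω).indicator H = H := by
    refine indicator_eq_self.mpr fun x hx => by_contra fun hx_hat => hx ?_
    simp [H, unfold, hx_hat, hG₀]
  have hcell : ∀ ξ : bigXi ε Ω,
      ∫⁻ x in cellOf ε (ξ : Fin N → ℤ), H x = ∫⁻ x in cellOf ε (ξ : Fin N → ℤ), G (w x) := by
    intro ⟨ξ, hξ⟩
    rw [setLIntegral_congr_fun
        (g := fun _ => ∫⁻ y in unitCell N, G (w fun i => ε * (ξ i + y i)))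
        (measurableSet_cellOf ε ξ) fun x hx => by simp only [H, unfold_of_mem_cellOf hε hξ hx],
      setLIntegral_const, volume_cellOf hε, mul_comm]
    exact ofReal_pow_mul_setLIntegral_unitCell hε ξ (hG.comp hw)
  calc ∫⁻ p in Ω ×ˢ unitCell N, G (unfold ε Ω w p.1 p.2)
      = ∫⁻ x in Ω, H x := by
        rw [Measure.volume_eq_prod, ← Measure.prod_restrict]
        exact lintegral_prod _ (hG.comp (measurable_unfold hw)).aemeasurable
    _ = ∫⁻ x in Ω, (hatOmega ε Ω).indicator (G ∘ w) x := by
        rw [← hH, lintegral_indicator_hatOmega hε, lintegral_indicator_hatOmega hε]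
        exact tsum_congr hcell
    _ = ∫⁻ x in Ω, G ((hatOmega ε Ω).indicator w x) := by
        rw [indicator_comp_of_zero hG₀]
        rfl

end Unfolding

theorem unfold_luxNorm_general (N : ℕ) (B : ℝ → ℝ) (hB : IsYoung B)
    (Ω : Set (Fin N → ℝ))
    (ε : ℝ) (hε : 0 < ε) (w : (Fin N → ℝ) → ℝ) (hw : Measurable w)
    (hwLB : ∃ k : ℝ, 0 < k ∧
      ∫⁻ x in Ω, ENNReal.ofReal (B (|w x| / k)) ≤ 1) :
    luxNorm (MeasureTheory.volume.restrict (Ω ×ˢ unitCell N)) B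
        (fun p => unfold ε Ω w p.1 p.2) =
      luxNorm (MeasureTheory.volume.restrict Ω) B ((hatOmega ε Ω).indicator w) ∧
    luxNorm (MeasureTheory.volume.restrict Ω) B ((hatOmega ε Ω).indicator w) ≤
      luxNorm (MeasureTheory.volume.restrict Ω) B w ∧
    luxNorm (MeasureTheory.volume.restrict (Ω ×ˢ unitCell N)) B
        (fun p => unfold ε Ω w p.1 p.2) ≤
      (1 + (MeasureTheory.volume (unitCell N)).toReal) *
        luxNorm (MeasureTheory.volume.restrict Ω) B w := by
  have hunfold := luxNorm_eq_of_lintegral_eq fun k hk =>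
    lintegral_comp_unfold (Ω := Ω) hε hw (ENNReal.measurable_ofReal.comp
      (hB.measurable_comp_abs_div hk)) (by simp [hB.map_zero])
  have hindicator := luxNorm_le_of_abs_le (μ := volume.restrict Ω) hB.monotoneOn
    (fun x => norm_indicator_le_norm_self (s := hatOmega ε Ω) w x) hwLB
  refine ⟨hunfold, hindicator, ?_⟩
  rw [hunfold]
  exact hindicator.trans (le_mul_of_one_le_left (luxNorm_nonneg _ B w)
    (le_add_of_nonneg_right ENNReal.toReal_nonneg))

/-- Luxemburg-norm identities for the unfolding operator:
`‖T_ε w‖_{L^B(Ω×Y)} = ‖w·χ_{Ω̂_ε}‖_{L^B(Ω)} ≤ ‖w‖_{L^B(Ω)} ≤ (1+|Y|)‖w‖_{L^B(Ω)}`. -/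
theorem unfold_luxNorm (N : ℕ) (B : ℝ → ℝ) (hB : IsYoung B)
    (Ω : Set (Fin N → ℝ)) (hΩopen : IsOpen Ω) (hΩbdd : Bornology.IsBounded Ω)
    (ε : ℝ) (hε : 0 < ε) (w : (Fin N → ℝ) → ℝ) (hw : Measurable w)
    (hwLB : ∃ k : ℝ, 0 < k ∧
      ∫⁻ x in Ω, ENNReal.ofReal (B (|w x| / k)) ≤ 1) :
    luxNorm (MeasureTheory.volume.restrict (Ω ×ˢ unitCell N)) B
        (fun p => unfold ε Ω w p.1 p.2) =
      luxNorm (MeasureTheory.volume.restrict Ω) B ((hatOmega ε Ω).indicator w) ∧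
    luxNorm (MeasureTheory.volume.restrict Ω) B ((hatOmega ε Ω).indicator w) ≤
      luxNorm (MeasureTheory.volume.restrict Ω) B w ∧
    luxNorm (MeasureTheory.volume.restrict (Ω ×ˢ unitCell N)) B
        (fun p => unfold ε Ω w p.1 p.2) ≤
      (1 + (MeasureTheory.volume (unitCell N)).toReal) *
        luxNorm (MeasureTheory.volume.restrict Ω) B w :=
  unfold_luxNorm_general N B hB Ω ε hε w hw hwLB
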